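/- arXiv:1602.00986 — 7 statements merged into one kernel-verified Lean document; each statement's English description precedes it below -/
import Mathlib

section
/- Let C > 0, Γ > 0, and let p, q : ℝ → ℝ be differentiable on [0, C] with p(V), q(V) ∈ [0,1], r(V) := p(V) + q(V) − p(V)q(V) > 0, p′(V) ≥ 0 and q′(V) ≤ 0 for all V ∈ [0, C]. Then M(V) = Γ·[(C − V)·p(V)/r(V) + V] satisfies M′(V) ≥ 0 for all V ∈ [0, C]; in particular M is nondecreasing on [0, C]. -/
/-!
Write `r = p + q - pq`. Since `r' = p'(1 - q) + q'(1 - p)`, the quotient rule gives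
`r² · M'(V) / Γ = r q (1 - p) + (C - V) (p' q - q' p (1 - p))`,
and under the sign assumptions every term on the right is nonnegative.
-/

/-- `M'(V)` in the factored form above, with `p, q, p', q'` evaluated at `V`. -/
noncomputable def revenueSlope (C Γ V p q p' q' : ℝ) : ℝ :=
  Γ * ((p + q - p * q) * q * (1 - p) + (C - V) * (p' * q - q' * p * (1 - p))) /
    (p + q - p * q) ^ 2

theorem hasDerivAt_revenue {C Γ V p' q' : ℝ} {p q : ℝ → ℝ}
    (hp : HasDerivAt p p' V) (hq : HasDerivAt q q' V) (hr : p V + q V - p V * q V ≠ 0) :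
    HasDerivAt (fun v => Γ * ((C - v) * p v / (p v + q v - p v * q v) + v))
      (revenueSlope C Γ V (p V) (q V) p' q') V := by
  have hlen : HasDerivAt (fun v => C - v) (-1) V := by
    simpa using (hasDerivAt_id V).const_sub C
  have hr' := (hp.add hq).sub (hp.mul hq)
  refine ((((hlen.mul hp).div hr' hr).add (hasDerivAt_id V)).const_mul Γ).congr_deriv ?_
  simp only [revenueSlope, Pi.add_apply, Pi.sub_apply, Pi.mul_apply]
  field_simp
  ring

theorem revenueSlope_nonneg {C Γ V p q p' q' : ℝ} (hΓ : 0 ≤ Γ) (hV : V ≤ C)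
    (hp0 : 0 ≤ p) (hp1 : p ≤ 1) (hq0 : 0 ≤ q) (hr : 0 ≤ p + q - p * q)
    (hp' : 0 ≤ p') (hq' : q' ≤ 0) :
    0 ≤ revenueSlope C Γ V p q p' q' := by
  have hleft : 0 ≤ (p + q - p * q) * q * (1 - p) :=
    mul_nonneg (mul_nonneg hr hq0) (sub_nonneg.2 hp1)
  have hdrop : 0 ≤ p' * q - q' * p * (1 - p) := by
    have hloss := mul_nonneg (mul_nonneg (neg_nonneg.2 hq') hp0) (sub_nonneg.2 hp1)
    nlinarith [mul_nonneg hp' hq0]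
  have hright := mul_nonneg (sub_nonneg.2 hV) hdrop
  unfold revenueSlope
  positivity

theorem monotoneOn_of_hasDerivAt_nonneg {D : Set ℝ} (hD : Convex ℝ D) {f f' : ℝ → ℝ}
    (hf : ∀ x ∈ D, HasDerivAt f (f' x) x) (hf'₀ : ∀ x ∈ D, 0 ≤ f' x) : MonotoneOn f D :=
  monotoneOn_of_hasDerivWithinAt_nonneg hD
    (fun x hx => (hf x hx).continuousAt.continuousWithinAt)
    (fun x hx => (hf x (interior_subset hx)).hasDerivWithinAt)
    (fun x hx => hf'₀ x (interior_subset hx))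

theorem stmt_6_general (C Γ : ℝ) (p q p' q' : ℝ → ℝ)
    (hΓ : 0 < Γ)
    (hp : ∀ V ∈ Set.Icc (0:ℝ) C, HasDerivAt p (p' V) V)
    (hq : ∀ V ∈ Set.Icc (0:ℝ) C, HasDerivAt q (q' V) V)
    (hp01 : ∀ V ∈ Set.Icc (0:ℝ) C, p V ∈ Set.Icc (0:ℝ) 1)
    (hq01 : ∀ V ∈ Set.Icc (0:ℝ) C, q V ∈ Set.Icc (0:ℝ) 1)
    (hr : ∀ V ∈ Set.Icc (0:ℝ) C, 0 < p V + q V - p V * q V)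
    (hp' : ∀ V ∈ Set.Icc (0:ℝ) C, 0 ≤ p' V)
    (hq' : ∀ V ∈ Set.Icc (0:ℝ) C, q' V ≤ 0) :
    (∀ V ∈ Set.Icc (0:ℝ) C,
      0 ≤ deriv (fun v => Γ * ((C - v) * p v / (p v + q v - p v * q v) + v)) V) ∧
    MonotoneOn (fun v => Γ * ((C - v) * p v / (p v + q v - p v * q v) + v))
      (Set.Icc (0:ℝ) C) := by
  have hderiv : ∀ V ∈ Set.Icc (0:ℝ) C,
      HasDerivAt (fun v => Γ * ((C - v) * p v / (p v + q v - p v * q v) + v))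
        (revenueSlope C Γ V (p V) (q V) (p' V) (q' V)) V :=
    fun V hV => hasDerivAt_revenue (hp V hV) (hq V hV) (hr V hV).ne'
  have hslope : ∀ V ∈ Set.Icc (0:ℝ) C, 0 ≤ revenueSlope C Γ V (p V) (q V) (p' V) (q' V) :=
    fun V hV => revenueSlope_nonneg hΓ.le hV.2 (hp01 V hV).1 (hp01 V hV).2 (hq01 V hV).1
      (hr V hV).le (hp' V hV) (hq' V hV)
  exact ⟨fun V hV => (hderiv V hV).deriv ▸ hslope V hV,
    monotoneOn_of_hasDerivAt_nonneg (convex_Icc 0 C) hderiv hslope⟩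

/-- If `p, q` are differentiable on `[0, C]` with `p, q ∈ [0,1]`,
`r := p + q − pq > 0`, `p′ ≥ 0` and `q′ ≤ 0` there, then
`M(V) = Γ[(C − V)p(V)/r(V) + V]` has nonnegative derivative on `[0, C]`;
in particular `M` is nondecreasing on `[0, C]`. -/
theorem stmt_6 (C Γ : ℝ) (p q p' q' : ℝ → ℝ)
    (hC : 0 < C) (hΓ : 0 < Γ)
    (hp : ∀ V ∈ Set.Icc (0:ℝ) C, HasDerivAt p (p' V) V)
    (hq : ∀ V ∈ Set.Icc (0:ℝ) C, HasDerivAt q (q' V) V)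
    (hp01 : ∀ V ∈ Set.Icc (0:ℝ) C, p V ∈ Set.Icc (0:ℝ) 1)
    (hq01 : ∀ V ∈ Set.Icc (0:ℝ) C, q V ∈ Set.Icc (0:ℝ) 1)
    (hr : ∀ V ∈ Set.Icc (0:ℝ) C, 0 < p V + q V - p V * q V)
    (hp' : ∀ V ∈ Set.Icc (0:ℝ) C, 0 ≤ p' V)
    (hq' : ∀ V ∈ Set.Icc (0:ℝ) C, q' V ≤ 0) :
    (∀ V ∈ Set.Icc (0:ℝ) C,
      0 ≤ deriv (fun v => Γ * ((C - v) * p v / (p v + q v - p v * q v) + v)) V) ∧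
    MonotoneOn (fun v => Γ * ((C - v) * p v / (p v + q v - p v * q v) + v))
      (Set.Icc (0:ℝ) C) :=
  stmt_6_general C Γ p q p' q' hΓ hp hq hp01 hq01 hr hp' hq'
end

section
/- Let C > 0, Γ > 0, and let p, q : ℝ → ℝ be twice differentiable on [0, C] with p(V), q(V) ∈ [0,1] and r(V) := p(V) + q(V) − p(V)q(V) > 0. Assume on [0, C] that p′ ≥ 0 and p″ ≤ 0 (p increasing and concave), q′ ≤ 0 and q″ ≥ 0 (q decreasing and convex), and r′ ≥ 0 (r increasing). Then M(V) = Γ·[(C − V)·p(V)/r(V) + V] satisfies M″(V) ≤ 0 for all V ∈ [0, C]; in particular M is concave on [0, C]. -/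
/-!
Write `r = p + q - p q` and `ρ = p / r`. Then `M = Γ ((C - V) ρ + V)` and
`M'' = Γ ((C - V) ρ'' - 2 ρ')`, so it suffices that `ρ` is increasing and concave on `[0, C]`.
With `ρ' = (p' r - p r') / r²` and `ρ'' = ((p'' r - p r'') r - 2 (p' r - p r') r') / r³`, this
follows from `r > 0`, `r' ≥ 0` and the sign of the two cross terms, which simplify to
`p' r - p r' = p' q - p (1 - p) q' ≥ 0` and `p'' r - p r'' = p'' q + 2 p p' q' - p (1 - p) q'' ≤ 0`.
-/

open Set

section Revenue

variable {ρ ρ' ρ'' : ℝ → ℝ} {a C Γ x : ℝ}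

theorem hasDerivAt_revenue_s7 (hρ : HasDerivAt ρ (ρ' x) x) :
    HasDerivAt (fun v => Γ * ((C - v) * ρ v + v)) (Γ * ((C - x) * ρ' x - ρ x + 1)) x :=
  ((((hasDerivAt_id x).const_sub C).mul hρ).add (hasDerivAt_id x)).const_mul Γ
    |>.congr_deriv (by simp only [id]; ring)

theorem hasDerivAt_revenue_deriv (hρ : HasDerivAt ρ (ρ' x) x) (hρ' : HasDerivAt ρ' (ρ'' x) x) :
    HasDerivAt (fun v => Γ * ((C - v) * ρ' v - ρ v + 1)) (Γ * ((C - x) * ρ'' x - 2 * ρ' x)) x :=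
  (((((hasDerivAt_id x).const_sub C).mul hρ').sub hρ).add_const 1).const_mul Γ
    |>.congr_deriv (by simp only [id]; ring)

theorem exists_revenue_deriv2_nonpos (hΓ : 0 ≤ Γ)
    (hρ : ∀ x ∈ Icc a C, HasDerivAt ρ (ρ' x) x) (hρ' : ∀ x ∈ Icc a C, HasDerivAt ρ' (ρ'' x) x)
    (hρ'_nonneg : ∀ x ∈ Icc a C, 0 ≤ ρ' x) (hρ''_nonpos : ∀ x ∈ Icc a C, ρ'' x ≤ 0) :
    ∃ M' : ℝ → ℝ,
      (∀ x ∈ Icc a C, HasDerivAt (fun v => Γ * ((C - v) * ρ v + v)) (M' x) x) ∧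
      (∀ x ∈ Icc a C, ∃ m ≤ (0 : ℝ), HasDerivAt M' m x) ∧
      ConcaveOn ℝ (Icc a C) (fun v => Γ * ((C - v) * ρ v + v)) := by
  have hM : ∀ x ∈ Icc a C, HasDerivAt (fun v => Γ * ((C - v) * ρ v + v))
      (Γ * ((C - x) * ρ' x - ρ x + 1)) x := fun x hx => hasDerivAt_revenue_s7 (hρ x hx)
  have hM' : ∀ x ∈ Icc a C, HasDerivAt (fun v => Γ * ((C - v) * ρ' v - ρ v + 1))
      (Γ * ((C - x) * ρ'' x - 2 * ρ' x)) x :=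
    fun x hx => hasDerivAt_revenue_deriv (hρ x hx) (hρ' x hx)
  have hM''_nonpos : ∀ x ∈ Icc a C, Γ * ((C - x) * ρ'' x - 2 * ρ' x) ≤ 0 := by
    intro x hx
    have := mul_nonpos_of_nonneg_of_nonpos (sub_nonneg.2 hx.2) (hρ''_nonpos x hx)
    exact mul_nonpos_of_nonneg_of_nonpos hΓ (by linarith [hρ'_nonneg x hx])
  refine ⟨_, hM, fun x hx => ⟨_, hM''_nonpos x hx, hM' x hx⟩, ?_⟩
  exact concaveOn_of_hasDerivWithinAt2_nonpos (convex_Icc a C)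
    (fun x hx => (hM x hx).continuousAt.continuousWithinAt)
    (fun x hx => (hM x (interior_subset hx)).hasDerivWithinAt)
    (fun x hx => (hM' x (interior_subset hx)).hasDerivWithinAt)
    (fun x hx => hM''_nonpos x (interior_subset hx))

end Revenue

section Quotient

variable {f g f' g' f'' g'' : ℝ → ℝ} {a C Γ x : ℝ}

theorem hasDerivAt_div_deriv (hf : HasDerivAt f (f' x) x) (hg : HasDerivAt g (g' x) x)
    (hf' : HasDerivAt f' (f'' x) x) (hg' : HasDerivAt g' (g'' x) x) (hgx : g x ≠ 0) :
    HasDerivAt (fun v => (f' v * g v - f v * g' v) / g v ^ 2)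
      (((f'' x * g x - f x * g'' x) * g x - 2 * (f' x * g x - f x * g' x) * g' x) / g x ^ 3) x :=
  (((hf'.mul hg).sub (hf.mul hg')).div (hg.pow 2) (pow_ne_zero 2 hgx)).congr_deriv
    (by simp only [Pi.pow_apply, Pi.mul_apply, Pi.sub_apply]; field_simp; ring)

theorem exists_revenue_div_deriv2_nonpos (hΓ : 0 ≤ Γ)
    (hf : ∀ x ∈ Icc a C, HasDerivAt f (f' x) x) (hg : ∀ x ∈ Icc a C, HasDerivAt g (g' x) x)
    (hf' : ∀ x ∈ Icc a C, HasDerivAt f' (f'' x) x) (hg' : ∀ x ∈ Icc a C, HasDerivAt g' (g'' x) x)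
    (hg_pos : ∀ x ∈ Icc a C, 0 < g x) (hg'_nonneg : ∀ x ∈ Icc a C, 0 ≤ g' x)
    (hcross : ∀ x ∈ Icc a C, 0 ≤ f' x * g x - f x * g' x)
    (hcross' : ∀ x ∈ Icc a C, f'' x * g x - f x * g'' x ≤ 0) :
    ∃ M' : ℝ → ℝ,
      (∀ x ∈ Icc a C, HasDerivAt (fun v => Γ * ((C - v) * f v / g v + v)) (M' x) x) ∧
      (∀ x ∈ Icc a C, ∃ m ≤ (0 : ℝ), HasDerivAt M' m x) ∧
      ConcaveOn ℝ (Icc a C) (fun v => Γ * ((C - v) * f v / g v + v)) := by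
  simp_rw [mul_div_assoc]
  refine exists_revenue_deriv2_nonpos hΓ
    (fun x hx => (hf x hx).div (hg x hx) (hg_pos x hx).ne')
    (fun x hx => hasDerivAt_div_deriv (hf x hx) (hg x hx) (hf' x hx) (hg' x hx) (hg_pos x hx).ne')
    (fun x hx => div_nonneg (hcross x hx) (sq_nonneg _)) fun x hx => ?_
  have := mul_nonneg (hcross x hx) (hg'_nonneg x hx)
  have := mul_nonpos_of_nonpos_of_nonneg (hcross' x hx) (hg_pos x hx).le
  exact div_nonpos_of_nonpos_of_nonneg (by linarith) (pow_pos (hg_pos x hx) 3).le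

end Quotient

section ProbSum

variable {a b a₁ b₁ a₂ b₂ : ℝ}

theorem probSum_cross_nonneg (ha : a ∈ Icc 0 1) (hb : 0 ≤ b) (ha₁ : 0 ≤ a₁) (hb₁ : b₁ ≤ 0) :
    0 ≤ a₁ * (a + b - a * b) - a * (a₁ + b₁ - a₁ * b - a * b₁) := by
  rw [show a₁ * (a + b - a * b) - a * (a₁ + b₁ - a₁ * b - a * b₁)
      = a₁ * b - a * (1 - a) * b₁ by ring]
  have := mul_nonpos_of_nonneg_of_nonpos (mul_nonneg ha.1 (sub_nonneg.2 ha.2)) hb₁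
  linarith [mul_nonneg ha₁ hb]

theorem probSum_cross_deriv_nonpos (ha : a ∈ Icc 0 1) (hb : 0 ≤ b) (ha₁ : 0 ≤ a₁) (hb₁ : b₁ ≤ 0)
    (ha₂ : a₂ ≤ 0) (hb₂ : 0 ≤ b₂) :
    a₂ * (a + b - a * b) - a * (a₂ + b₂ - a₂ * b - 2 * a₁ * b₁ - a * b₂) ≤ 0 := by
  rw [show a₂ * (a + b - a * b) - a * (a₂ + b₂ - a₂ * b - 2 * a₁ * b₁ - a * b₂)
      = a₂ * b + 2 * (a * a₁) * b₁ - a * (1 - a) * b₂ by ring]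
  have := mul_nonneg (mul_nonneg ha.1 (sub_nonneg.2 ha.2)) hb₂
  have := mul_nonpos_of_nonneg_of_nonpos (mul_nonneg ha.1 ha₁) hb₁
  linarith [mul_nonpos_of_nonpos_of_nonneg ha₂ hb]

end ProbSum

theorem stmt_7_general (C Γ : ℝ) (p q p' q' p'' q'' : ℝ → ℝ)
    (hΓ : 0 < Γ)
    (hp : ∀ V ∈ Set.Icc (0:ℝ) C, HasDerivAt p (p' V) V)
    (hq : ∀ V ∈ Set.Icc (0:ℝ) C, HasDerivAt q (q' V) V)
    (hp' : ∀ V ∈ Set.Icc (0:ℝ) C, HasDerivAt p' (p'' V) V)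
    (hq' : ∀ V ∈ Set.Icc (0:ℝ) C, HasDerivAt q' (q'' V) V)
    (hp01 : ∀ V ∈ Set.Icc (0:ℝ) C, p V ∈ Set.Icc (0:ℝ) 1)
    (hq01 : ∀ V ∈ Set.Icc (0:ℝ) C, q V ∈ Set.Icc (0:ℝ) 1)
    (hr : ∀ V ∈ Set.Icc (0:ℝ) C, 0 < p V + q V - p V * q V)
    (hp'pos : ∀ V ∈ Set.Icc (0:ℝ) C, 0 ≤ p' V)
    (hp''neg : ∀ V ∈ Set.Icc (0:ℝ) C, p'' V ≤ 0)
    (hq'neg : ∀ V ∈ Set.Icc (0:ℝ) C, q' V ≤ 0)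
    (hq''pos : ∀ V ∈ Set.Icc (0:ℝ) C, 0 ≤ q'' V)
    (hr' : ∀ V ∈ Set.Icc (0:ℝ) C,
      0 ≤ p' V + q' V - p' V * q V - p V * q' V) :
    ∃ M' : ℝ → ℝ,
      (∀ V ∈ Set.Icc (0:ℝ) C,
        HasDerivAt (fun v => Γ * ((C - v) * p v / (p v + q v - p v * q v) + v))
          (M' V) V) ∧
      (∀ V ∈ Set.Icc (0:ℝ) C, ∃ m2 ≤ (0:ℝ), HasDerivAt M' m2 V) ∧
      ConcaveOn ℝ (Set.Icc (0:ℝ) C)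
        (fun v => Γ * ((C - v) * p v / (p v + q v - p v * q v) + v)) := by
  have hr_deriv : ∀ V ∈ Icc (0:ℝ) C, HasDerivAt (fun v => p v + q v - p v * q v)
      (p' V + q' V - p' V * q V - p V * q' V) V := fun V hV =>
    (((hp V hV).add (hq V hV)).sub ((hp V hV).mul (hq V hV))).congr_deriv (by ring)
  have hr'_deriv : ∀ V ∈ Icc (0:ℝ) C, HasDerivAt (fun v => p' v + q' v - p' v * q v - p v * q' v)
      (p'' V + q'' V - p'' V * q V - 2 * p' V * q' V - p V * q'' V) V := fun V hV =>
    ((((hp' V hV).add (hq' V hV)).sub ((hp' V hV).mul (hq V hV))).sub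
      ((hp V hV).mul (hq' V hV))).congr_deriv (by ring)
  refine exists_revenue_div_deriv2_nonpos hΓ.le hp hr_deriv hp' hr'_deriv hr hr' (fun V hV => ?_)
    fun V hV => ?_
  · exact probSum_cross_nonneg (hp01 V hV) (hq01 V hV).1 (hp'pos V hV) (hq'neg V hV)
  · exact probSum_cross_deriv_nonpos (hp01 V hV) (hq01 V hV).1 (hp'pos V hV) (hq'neg V hV)
      (hp''neg V hV) (hq''pos V hV)

/-- If `p, q` are twice differentiable on `[0, C]` with `p, q ∈ [0,1]`,
`r := p + q − pq > 0`, `p` increasing and concave (`p′ ≥ 0`, `p″ ≤ 0`),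
`q` decreasing and convex (`q′ ≤ 0`, `q″ ≥ 0`), and `r` increasing (`r′ ≥ 0`)
on `[0, C]`, then `M(V) = Γ[(C − V)p(V)/r(V) + V]` has nonpositive second
derivative on `[0, C]`; in particular `M` is concave on `[0, C]`. -/
theorem stmt_7 (C Γ : ℝ) (p q p' q' p'' q'' : ℝ → ℝ)
    (hC : 0 < C) (hΓ : 0 < Γ)
    (hp : ∀ V ∈ Set.Icc (0:ℝ) C, HasDerivAt p (p' V) V)
    (hq : ∀ V ∈ Set.Icc (0:ℝ) C, HasDerivAt q (q' V) V)
    (hp' : ∀ V ∈ Set.Icc (0:ℝ) C, HasDerivAt p' (p'' V) V)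
    (hq' : ∀ V ∈ Set.Icc (0:ℝ) C, HasDerivAt q' (q'' V) V)
    (hp01 : ∀ V ∈ Set.Icc (0:ℝ) C, p V ∈ Set.Icc (0:ℝ) 1)
    (hq01 : ∀ V ∈ Set.Icc (0:ℝ) C, q V ∈ Set.Icc (0:ℝ) 1)
    (hr : ∀ V ∈ Set.Icc (0:ℝ) C, 0 < p V + q V - p V * q V)
    (hp'pos : ∀ V ∈ Set.Icc (0:ℝ) C, 0 ≤ p' V)
    (hp''neg : ∀ V ∈ Set.Icc (0:ℝ) C, p'' V ≤ 0)
    (hq'neg : ∀ V ∈ Set.Icc (0:ℝ) C, q' V ≤ 0)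
    (hq''pos : ∀ V ∈ Set.Icc (0:ℝ) C, 0 ≤ q'' V)
    (hr' : ∀ V ∈ Set.Icc (0:ℝ) C,
      0 ≤ p' V + q' V - p' V * q V - p V * q' V) :
    ∃ M' : ℝ → ℝ,
      (∀ V ∈ Set.Icc (0:ℝ) C,
        HasDerivAt (fun v => Γ * ((C - v) * p v / (p v + q v - p v * q v) + v))
          (M' V) V) ∧
      (∀ V ∈ Set.Icc (0:ℝ) C, ∃ m2 ≤ (0:ℝ), HasDerivAt M' m2 V) ∧
      ConcaveOn ℝ (Set.Icc (0:ℝ) C)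
        (fun v => Γ * ((C - v) * p v / (p v + q v - p v * q v) + v)) :=
  stmt_7_general C Γ p q p' q' p'' q'' hΓ hp hq hp' hq' hp01 hq01 hr hp'pos hp''neg hq'neg hq''pos
    hr'
end

section
/- Let d > 0, S₁, S₂ ≥ 0, C > S₁ + S₂, Γ₁, Γ₂ > 0, and set C_s = C − S₁ − S₂. Assume 0 < C_s < d and Γ₁/Γ₂ ≤ (d + 2(S₁ + S₂) − C)/(C + d). Then the allocation V₁ = 0, V₂ = C_s maximizes g(V₁, V₂) = Γ₁·V₁(C + d − V₁)/d + Γ₂·V₂(C + d − V₂)/d over all V₁, V₂ ≥ 0 with V₁ + V₂ = C_s. -/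
/-!
Put `s = C - S₁ - S₂`, `K = C + d` and `V₁ = x`, `V₂ = s - x`. Then `d` times the gain over the
allocation `(0, s)` equals `x (Γ₁ K - Γ₂ (K - 2s)) - (Γ₁ + Γ₂) x²`. Since `K - 2s = d + 2(S₁ + S₂) - C`,
the ratio condition says exactly that the linear coefficient is `≤ 0`, so both terms are `≤ 0`
for `x ≥ 0`.
-/

lemma two_station_gain_sub_endpoint (Γ₁ Γ₂ K s x : ℝ) :
    Γ₁ * x * (K - x) + Γ₂ * (s - x) * (K - (s - x)) - (Γ₁ * 0 * (K - 0) + Γ₂ * s * (K - s))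
      = x * (Γ₁ * K - Γ₂ * (K - 2 * s)) - (Γ₁ + Γ₂) * x ^ 2 := by
  ring

lemma two_station_gain_le_endpoint {Γ₁ Γ₂ K s d x : ℝ} (hd : 0 ≤ d) (hΓ : 0 ≤ Γ₁ + Γ₂)
    (hslope : Γ₁ * K ≤ Γ₂ * (K - 2 * s)) (hx : 0 ≤ x) :
    Γ₁ * x * (K - x) / d + Γ₂ * (s - x) * (K - (s - x)) / d
      ≤ Γ₁ * 0 * (K - 0) / d + Γ₂ * s * (K - s) / d := by
  rw [← add_div, ← add_div]
  apply div_le_div_of_nonneg_right _ hd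
  have hgain := two_station_gain_sub_endpoint Γ₁ Γ₂ K s x
  nlinarith [mul_nonneg hx (sub_nonneg.mpr hslope), mul_nonneg hΓ (sq_nonneg x)]

theorem stmt_9_general (C d S1 S2 Γ1 Γ2 : ℝ)
    (hd : 0 < d) (hS1 : 0 ≤ S1) (hS2 : 0 ≤ S2)
    (hC : S1 + S2 < C) (hΓ1 : 0 < Γ1) (hΓ2 : 0 < Γ2)
    (hratio : Γ1 / Γ2 ≤ (d + 2 * (S1 + S2) - C) / (C + d)) :
    ∀ V1 V2 : ℝ, 0 ≤ V1 → 0 ≤ V2 → V1 + V2 = C - S1 - S2 →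
      Γ1 * V1 * (C + d - V1) / d + Γ2 * V2 * (C + d - V2) / d
        ≤ Γ1 * 0 * (C + d - 0) / d
          + Γ2 * (C - S1 - S2) * (C + d - (C - S1 - S2)) / d := by
  intro V1 V2 hV1 _ hsum
  obtain rfl : V2 = C - S1 - S2 - V1 := by linarith
  have hslope : Γ1 * (C + d) ≤ Γ2 * (C + d - 2 * (C - S1 - S2)) := by
    have hK : 0 < C + d := by linarith
    rw [div_le_div_iff₀ hΓ2 hK] at hratio
    linarith
  exact two_station_gain_le_endpoint hd.le (by positivity) hslope hV1

/-- Example 1, case 1 (scarce resources): if `0 < C_s < d` and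
`Γ₁/Γ₂ ≤ (d + 2(S₁ + S₂) − C)/(C + d)`, then the allocation
`V₁ = 0`, `V₂ = C_s` maximizes
`g(V₁, V₂) = Γ₁V₁(C + d − V₁)/d + Γ₂V₂(C + d − V₂)/d`
over all `V₁, V₂ ≥ 0` with `V₁ + V₂ = C_s`. -/
theorem stmt_9 (C d S1 S2 Γ1 Γ2 : ℝ)
    (hd : 0 < d) (hS1 : 0 ≤ S1) (hS2 : 0 ≤ S2)
    (hC : S1 + S2 < C) (hΓ1 : 0 < Γ1) (hΓ2 : 0 < Γ2)
    (hCs : C - S1 - S2 < d)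
    (hratio : Γ1 / Γ2 ≤ (d + 2 * (S1 + S2) - C) / (C + d)) :
    ∀ V1 V2 : ℝ, 0 ≤ V1 → 0 ≤ V2 → V1 + V2 = C - S1 - S2 →
      Γ1 * V1 * (C + d - V1) / d + Γ2 * V2 * (C + d - V2) / d
        ≤ Γ1 * 0 * (C + d - 0) / d
          + Γ2 * (C - S1 - S2) * (C + d - (C - S1 - S2)) / d :=
  stmt_9_general C d S1 S2 Γ1 Γ2 hd hS1 hS2 hC hΓ1 hΓ2 hratio
end

section
/- Let d > 0, S₁, S₂ ≥ 0, C > S₁ + S₂, Γ₁, Γ₂ > 0, and set C_s = C − S₁ − S₂. Assume 0 < C_s < d and Γ₂/Γ₁ ≤ (d + 2(S₁ + S₂) − C)/(C + d). Then the allocation V₁ = C_s, V₂ = 0 maximizes g(V₁, V₂) = Γ₁·V₁(C + d − V₁)/d + Γ₂·V₂(C + d − V₂)/d over all V₁, V₂ ≥ 0 with V₁ + V₂ = C_s. -/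
/-! Write `K = C + d` and `s = C - S₁ - S₂`. Moving an amount `t ≥ 0` of the visit time from
station 1 to station 2 changes `d · g` by `t · (Γ₂ K - Γ₁ (K - 2s)) - (Γ₁ + Γ₂) t²`. The ratio
hypothesis says exactly that the linear coefficient is nonpositive, so every such move loses. -/

lemma weighted_revenue_le_corner {Γ₁ Γ₂ K s t : ℝ} (hΓ₁ : 0 ≤ Γ₁) (hΓ₂ : 0 ≤ Γ₂) (ht : 0 ≤ t)
    (h : Γ₂ * K ≤ Γ₁ * (K - 2 * s)) :
    Γ₁ * (s - t) * (K - (s - t)) + Γ₂ * t * (K - t) ≤ Γ₁ * s * (K - s) := by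
  have hlin : t * (Γ₂ * K - Γ₁ * (K - 2 * s)) ≤ 0 :=
    mul_nonpos_of_nonneg_of_nonpos ht (by linarith)
  have hquad : 0 ≤ (Γ₁ + Γ₂) * t ^ 2 := by positivity
  calc Γ₁ * (s - t) * (K - (s - t)) + Γ₂ * t * (K - t)
      = Γ₁ * s * (K - s) + t * (Γ₂ * K - Γ₁ * (K - 2 * s)) - (Γ₁ + Γ₂) * t ^ 2 := by
        ring
    _ ≤ Γ₁ * s * (K - s) := by linarith

theorem stmt_10_general (C d S1 S2 Γ1 Γ2 : ℝ)
    (hd : 0 < d) (hS1 : 0 ≤ S1) (hS2 : 0 ≤ S2)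
    (hC : S1 + S2 < C) (hΓ1 : 0 < Γ1) (hΓ2 : 0 < Γ2)
    (hratio : Γ2 / Γ1 ≤ (d + 2 * (S1 + S2) - C) / (C + d)) :
    ∀ V1 V2 : ℝ, 0 ≤ V1 → 0 ≤ V2 → V1 + V2 = C - S1 - S2 →
      Γ1 * V1 * (C + d - V1) / d + Γ2 * V2 * (C + d - V2) / d
        ≤ Γ1 * (C - S1 - S2) * (C + d - (C - S1 - S2)) / d
          + Γ2 * 0 * (C + d - 0) / d := by
  intro V1 V2 _ hV2 hsum
  have hCd : 0 < C + d := by linarith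
  have hcoef : Γ2 * (C + d) ≤ Γ1 * (C + d - 2 * (C - S1 - S2)) := by
    rw [div_le_div_iff₀ hΓ1 hCd] at hratio
    linarith
  obtain rfl : V1 = C - S1 - S2 - V2 := by linarith
  rw [mul_zero, zero_mul, zero_div, add_zero, ← add_div]
  exact div_le_div_of_nonneg_right
    (weighted_revenue_le_corner hΓ1.le hΓ2.le hV2 hcoef) hd.le

/-- Example 1, case 2 (scarce resources): if `0 < C_s < d` and
`Γ₂/Γ₁ ≤ (d + 2(S₁ + S₂) − C)/(C + d)`, then the allocation
`V₁ = C_s`, `V₂ = 0` maximizes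
`g(V₁, V₂) = Γ₁V₁(C + d − V₁)/d + Γ₂V₂(C + d − V₂)/d`
over all `V₁, V₂ ≥ 0` with `V₁ + V₂ = C_s`. -/
theorem stmt_10 (C d S1 S2 Γ1 Γ2 : ℝ)
    (hd : 0 < d) (hS1 : 0 ≤ S1) (hS2 : 0 ≤ S2)
    (hC : S1 + S2 < C) (hΓ1 : 0 < Γ1) (hΓ2 : 0 < Γ2)
    (hCs : C - S1 - S2 < d)
    (hratio : Γ2 / Γ1 ≤ (d + 2 * (S1 + S2) - C) / (C + d)) :
    ∀ V1 V2 : ℝ, 0 ≤ V1 → 0 ≤ V2 → V1 + V2 = C - S1 - S2 →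
      Γ1 * V1 * (C + d - V1) / d + Γ2 * V2 * (C + d - V2) / d
        ≤ Γ1 * (C - S1 - S2) * (C + d - (C - S1 - S2)) / d
          + Γ2 * 0 * (C + d - 0) / d :=
  stmt_10_general C d S1 S2 Γ1 Γ2 hd hS1 hS2 hC hΓ1 hΓ2 hratio
end

section
/- Let d > 0, S₁, S₂ ≥ 0, C > S₁ + S₂, Γ₁, Γ₂ > 0, and set C_s = C − S₁ − S₂. Assume 0 < C_s < d, Γ₁/Γ₂ > (d + 2(S₁ + S₂) − C)/(C + d), and Γ₂/Γ₁ > (d + 2(S₁ + S₂) − C)/(C + d). Then the allocation V₁ = ½·(Γ₁(C_s + d + S₁ + S₂) + Γ₂(C_s − d − S₁ − S₂))/(Γ₁ + Γ₂), V₂ = ½·(Γ₁(C_s − d − S₁ − S₂) + Γ₂(C_s + d + S₁ + S₂))/(Γ₁ + Γ₂) satisfies V₁, V₂ ∈ (0, C_s) with V₁ + V₂ = C_s, and it maximizes g(V₁, V₂) = Γ₁·V₁(C + d − V₁)/d + Γ₂·V₂(C + d − V₂)/d over all V₁, V₂ ≥ 0 with V₁ + V₂ = C_s. -/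
/-!
With `K = C + d` and `T = C_s`, eliminating `V₂ = T - V₁` turns the revenue into a concave
quadratic in `V₁` with leading coefficient `-(Γ₁ + Γ₂)/d`; its vertex is the stated allocation,
and the revenue there exceeds any other admissible value by `(Γ₁ + Γ₂)(V₁ - V₁*)²/d`.
Since `K - 2T = d + 2(S₁ + S₂) - C`, the two ratio conditions are exactly what puts the vertex
strictly inside `(0, T)`.
-/

noncomputable def splitOptimum (Γ₁ Γ₂ K T : ℝ) : ℝ :=
  (1 / 2) * (Γ₁ * K + Γ₂ * (2 * T - K)) / (Γ₁ + Γ₂)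

section splitOptimum

variable {Γ₁ Γ₂ K T : ℝ}

theorem splitOptimum_swap (Γ₁ Γ₂ K T : ℝ) :
    splitOptimum Γ₂ Γ₁ K T = (1 / 2) * (Γ₁ * (2 * T - K) + Γ₂ * K) / (Γ₁ + Γ₂) := by
  rw [splitOptimum, add_comm Γ₂ Γ₁, add_comm (Γ₂ * K)]

theorem splitOptimum_add_swap (hΓ : Γ₁ + Γ₂ ≠ 0) :
    splitOptimum Γ₁ Γ₂ K T + splitOptimum Γ₂ Γ₁ K T = T := by
  rw [splitOptimum, splitOptimum, add_comm Γ₂ Γ₁]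
  field_simp
  ring

theorem splitOptimum_pos (hΓ₁ : 0 < Γ₁) (hΓ₂ : 0 < Γ₂) (hK : 0 < K)
    (h : (K - 2 * T) / K < Γ₁ / Γ₂) : 0 < splitOptimum Γ₁ Γ₂ K T := by
  rw [div_lt_div_iff₀ hK hΓ₂] at h
  unfold splitOptimum
  apply div_pos _ (by positivity)
  linarith

theorem splitOptimum_lt (hΓ₁ : 0 < Γ₁) (hΓ₂ : 0 < Γ₂) (hK : 0 < K)
    (h : (K - 2 * T) / K < Γ₂ / Γ₁) : splitOptimum Γ₁ Γ₂ K T < T := by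
  rw [div_lt_div_iff₀ hK hΓ₁] at h
  rw [splitOptimum, div_lt_iff₀ (by positivity)]
  linarith

theorem revenue_splitOptimum_sub_revenue {V₁ V₂ : ℝ} (hΓ : Γ₁ + Γ₂ ≠ 0) (hV : V₁ + V₂ = T) :
    (Γ₁ * splitOptimum Γ₁ Γ₂ K T * (K - splitOptimum Γ₁ Γ₂ K T)
        + Γ₂ * splitOptimum Γ₂ Γ₁ K T * (K - splitOptimum Γ₂ Γ₁ K T))
      - (Γ₁ * V₁ * (K - V₁) + Γ₂ * V₂ * (K - V₂))
      = (Γ₁ + Γ₂) * (V₁ - splitOptimum Γ₁ Γ₂ K T) ^ 2 := by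
  obtain rfl : V₂ = T - V₁ := by linarith
  have hswap : splitOptimum Γ₂ Γ₁ K T = T - splitOptimum Γ₁ Γ₂ K T := by
    linarith [splitOptimum_add_swap (K := K) (T := T) hΓ]
  rw [hswap, splitOptimum]
  field_simp
  ring

theorem revenue_le_revenue_splitOptimum {d V₁ V₂ : ℝ} (hΓ : 0 < Γ₁ + Γ₂) (hd : 0 < d)
    (hV : V₁ + V₂ = T) :
    Γ₁ * V₁ * (K - V₁) / d + Γ₂ * V₂ * (K - V₂) / d
      ≤ Γ₁ * splitOptimum Γ₁ Γ₂ K T * (K - splitOptimum Γ₁ Γ₂ K T) / d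
        + Γ₂ * splitOptimum Γ₂ Γ₁ K T * (K - splitOptimum Γ₂ Γ₁ K T) / d := by
  rw [← add_div, ← add_div]
  gcongr ?_ / d
  have hgap := revenue_splitOptimum_sub_revenue (K := K) hΓ.ne' hV
  linarith [mul_nonneg hΓ.le (sq_nonneg (V₁ - splitOptimum Γ₁ Γ₂ K T))]

end splitOptimum

theorem stmt_11_general (C d S1 S2 Γ1 Γ2 : ℝ)
    (hd : 0 < d) (hS1 : 0 ≤ S1) (hS2 : 0 ≤ S2)
    (hC : S1 + S2 < C) (hΓ1 : 0 < Γ1) (hΓ2 : 0 < Γ2)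
    (hratio1 : (d + 2 * (S1 + S2) - C) / (C + d) < Γ1 / Γ2)
    (hratio2 : (d + 2 * (S1 + S2) - C) / (C + d) < Γ2 / Γ1) :
    (0 < (1 / 2) * (Γ1 * ((C - S1 - S2) + d + S1 + S2)
            + Γ2 * ((C - S1 - S2) - d - S1 - S2)) / (Γ1 + Γ2) ∧
      (1 / 2) * (Γ1 * ((C - S1 - S2) + d + S1 + S2)
            + Γ2 * ((C - S1 - S2) - d - S1 - S2)) / (Γ1 + Γ2)
          < C - S1 - S2 ∧
      0 < (1 / 2) * (Γ1 * ((C - S1 - S2) - d - S1 - S2)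
            + Γ2 * ((C - S1 - S2) + d + S1 + S2)) / (Γ1 + Γ2) ∧
      (1 / 2) * (Γ1 * ((C - S1 - S2) - d - S1 - S2)
            + Γ2 * ((C - S1 - S2) + d + S1 + S2)) / (Γ1 + Γ2)
          < C - S1 - S2 ∧
      (1 / 2) * (Γ1 * ((C - S1 - S2) + d + S1 + S2)
            + Γ2 * ((C - S1 - S2) - d - S1 - S2)) / (Γ1 + Γ2)
        + (1 / 2) * (Γ1 * ((C - S1 - S2) - d - S1 - S2)
            + Γ2 * ((C - S1 - S2) + d + S1 + S2)) / (Γ1 + Γ2)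
          = C - S1 - S2) ∧
    (∀ V1 V2 : ℝ, 0 ≤ V1 → 0 ≤ V2 → V1 + V2 = C - S1 - S2 →
      Γ1 * V1 * (C + d - V1) / d + Γ2 * V2 * (C + d - V2) / d
        ≤ Γ1 * ((1 / 2) * (Γ1 * ((C - S1 - S2) + d + S1 + S2)
              + Γ2 * ((C - S1 - S2) - d - S1 - S2)) / (Γ1 + Γ2))
            * (C + d - (1 / 2) * (Γ1 * ((C - S1 - S2) + d + S1 + S2)
              + Γ2 * ((C - S1 - S2) - d - S1 - S2)) / (Γ1 + Γ2)) / d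
          + Γ2 * ((1 / 2) * (Γ1 * ((C - S1 - S2) - d - S1 - S2)
              + Γ2 * ((C - S1 - S2) + d + S1 + S2)) / (Γ1 + Γ2))
            * (C + d - (1 / 2) * (Γ1 * ((C - S1 - S2) - d - S1 - S2)
              + Γ2 * ((C - S1 - S2) + d + S1 + S2)) / (Γ1 + Γ2)) / d) := by
  have hK : 0 < C + d := by linarith
  have hΓ : 0 < Γ1 + Γ2 := by linarith
  have hsum : C - S1 - S2 + d + S1 + S2 = C + d := by ring
  have hdiff : C - S1 - S2 - d - S1 - S2 = 2 * (C - S1 - S2) - (C + d) := by ring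
  have hgap : d + 2 * (S1 + S2) - C = C + d - 2 * (C - S1 - S2) := by ring
  rw [hgap] at hratio1 hratio2
  rw [hsum, hdiff, ← splitOptimum_swap Γ1 Γ2 (C + d) (C - S1 - S2)]
  exact ⟨⟨splitOptimum_pos hΓ1 hΓ2 hK hratio1, splitOptimum_lt hΓ1 hΓ2 hK hratio2,
      splitOptimum_pos hΓ2 hΓ1 hK hratio2, splitOptimum_lt hΓ2 hΓ1 hK hratio1,
      splitOptimum_add_swap hΓ.ne'⟩,
    fun _ _ _ _ hV => revenue_le_revenue_splitOptimum hΓ hd hV⟩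

/-- Example 1, case 3 (scarce resources, interior optimum): if `0 < C_s < d`
and both `Γ₁/Γ₂` and `Γ₂/Γ₁` exceed `(d + 2(S₁ + S₂) − C)/(C + d)`, then
`V₁ = ½(Γ₁(C_s + d + S₁ + S₂) + Γ₂(C_s − d − S₁ − S₂))/(Γ₁ + Γ₂)` and
`V₂ = ½(Γ₁(C_s − d − S₁ − S₂) + Γ₂(C_s + d + S₁ + S₂))/(Γ₁ + Γ₂)` lie in
`(0, C_s)`, sum to `C_s`, and maximize
`g(V₁, V₂) = Γ₁V₁(C + d − V₁)/d + Γ₂V₂(C + d − V₂)/d`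
over all `V₁, V₂ ≥ 0` with `V₁ + V₂ = C_s`. -/
theorem stmt_11 (C d S1 S2 Γ1 Γ2 : ℝ)
    (hd : 0 < d) (hS1 : 0 ≤ S1) (hS2 : 0 ≤ S2)
    (hC : S1 + S2 < C) (hΓ1 : 0 < Γ1) (hΓ2 : 0 < Γ2)
    (hCs : C - S1 - S2 < d)
    (hratio1 : (d + 2 * (S1 + S2) - C) / (C + d) < Γ1 / Γ2)
    (hratio2 : (d + 2 * (S1 + S2) - C) / (C + d) < Γ2 / Γ1) :
    (0 < (1 / 2) * (Γ1 * ((C - S1 - S2) + d + S1 + S2)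
            + Γ2 * ((C - S1 - S2) - d - S1 - S2)) / (Γ1 + Γ2) ∧
      (1 / 2) * (Γ1 * ((C - S1 - S2) + d + S1 + S2)
            + Γ2 * ((C - S1 - S2) - d - S1 - S2)) / (Γ1 + Γ2)
          < C - S1 - S2 ∧
      0 < (1 / 2) * (Γ1 * ((C - S1 - S2) - d - S1 - S2)
            + Γ2 * ((C - S1 - S2) + d + S1 + S2)) / (Γ1 + Γ2) ∧
      (1 / 2) * (Γ1 * ((C - S1 - S2) - d - S1 - S2)
            + Γ2 * ((C - S1 - S2) + d + S1 + S2)) / (Γ1 + Γ2)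
          < C - S1 - S2 ∧
      (1 / 2) * (Γ1 * ((C - S1 - S2) + d + S1 + S2)
            + Γ2 * ((C - S1 - S2) - d - S1 - S2)) / (Γ1 + Γ2)
        + (1 / 2) * (Γ1 * ((C - S1 - S2) - d - S1 - S2)
            + Γ2 * ((C - S1 - S2) + d + S1 + S2)) / (Γ1 + Γ2)
          = C - S1 - S2) ∧
    (∀ V1 V2 : ℝ, 0 ≤ V1 → 0 ≤ V2 → V1 + V2 = C - S1 - S2 →
      Γ1 * V1 * (C + d - V1) / d + Γ2 * V2 * (C + d - V2) / d
        ≤ Γ1 * ((1 / 2) * (Γ1 * ((C - S1 - S2) + d + S1 + S2)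
              + Γ2 * ((C - S1 - S2) - d - S1 - S2)) / (Γ1 + Γ2))
            * (C + d - (1 / 2) * (Γ1 * ((C - S1 - S2) + d + S1 + S2)
              + Γ2 * ((C - S1 - S2) - d - S1 - S2)) / (Γ1 + Γ2)) / d
          + Γ2 * ((1 / 2) * (Γ1 * ((C - S1 - S2) - d - S1 - S2)
              + Γ2 * ((C - S1 - S2) + d + S1 + S2)) / (Γ1 + Γ2))
            * (C + d - (1 / 2) * (Γ1 * ((C - S1 - S2) - d - S1 - S2)
              + Γ2 * ((C - S1 - S2) + d + S1 + S2)) / (Γ1 + Γ2)) / d) :=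
  stmt_11_general C d S1 S2 Γ1 Γ2 hd hS1 hS2 hC hΓ1 hΓ2 hratio1 hratio2
end

section
/- Let 0 < d ≤ C, S₁, S₂ ≥ 0, C > S₁ + S₂, Γ₁, Γ₂ > 0, and set C_s = C − S₁ − S₂. Define Mᵢ(V) = Γᵢ·V(C + d − V)/d for 0 ≤ V ≤ d and Mᵢ(V) = Γᵢ·C for V > d. Assume d ≤ C_s < 2d, Γ₁/Γ₂ < (3d + 2(S₁ + S₂) − C)/(C − d), and Γ₂/Γ₁ < (3d + 2(S₁ + S₂) − C)/(C − d). Then the allocation V₁ = ½·(Γ₁(C_s + d + S₁ + S₂) + Γ₂(C_s − d − S₁ − S₂))/(Γ₁ + Γ₂), V₂ = ½·(Γ₁(C_s − d − S₁ − S₂) + Γ₂(C_s + d + S₁ + S₂))/(Γ₁ + Γ₂) satisfies V₁, V₂ ∈ [0, d] with V₁ + V₂ = C_s, and it maximizes M₁(V₁) + M₂(V₂) over all V₁, V₂ ≥ 0 with V₁ + V₂ = C_s. -/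
/-!
Beyond the threshold `d` the revenue `Mᵢ` is the constant `Γᵢ C`, which on `[d, C]` lies below
the quadratic `Γᵢ V (C + d - V) / d`, since their difference is `Γᵢ (V - d)(C - V) / d`.
So the revenue is bounded by the sum of two concave quadratics, whose maximum on the line
`V₁ + V₂ = C_s` is attained at the stationary point
`Γ₁ (C + d - 2 V₁) = Γ₂ (C + d - 2 V₂)`: this is the proposed allocation. The ratio
conditions put that point in `[0, d]²`, where `Mᵢ` agrees with the quadratic.
-/

/-- Example 1 gross revenue per cycle of a station with maximal gain rate `Γ`
and visit time `V`: `M(V) = Γ·V·(C + d − V)/d` for `V ≤ d` and `M(V) = Γ·C`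
for `V > d`. -/
noncomputable def Mrev (C d Γ V : ℝ) : ℝ :=
  if V ≤ d then Γ * V * (C + d - V) / d else Γ * C

lemma Mrev_of_le {C d Γ V : ℝ} (hV : V ≤ d) :
    Mrev C d Γ V = Γ * V * (C + d - V) / d :=
  if_pos hV

lemma Mrev_le_quadratic {C d Γ V : ℝ} (hd : 0 < d) (hΓ : 0 ≤ Γ) (hVC : V ≤ C) :
    Mrev C d Γ V ≤ Γ * V * (C + d - V) / d := by
  unfold Mrev
  split_ifs with hVd
  · exact le_rfl
  · rw [le_div_iff₀ hd]
    have : 0 ≤ Γ * ((V - d) * (C - V)) :=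
      mul_nonneg hΓ (mul_nonneg (by linarith) (by linarith))
    linarith

/-- On the line `v₁ + v₂ = w₁ + w₂` the gap to the stationary point is `(Γ₁ + Γ₂) (v₁ - w₁)²`. -/
lemma quadratic_revenue_le_of_stationary {Γ₁ Γ₂ K v₁ v₂ w₁ w₂ : ℝ} (hΓ : 0 ≤ Γ₁ + Γ₂)
    (hsum : v₁ + v₂ = w₁ + w₂) (hstat : Γ₁ * (K - 2 * w₁) = Γ₂ * (K - 2 * w₂)) :
    Γ₁ * v₁ * (K - v₁) + Γ₂ * v₂ * (K - v₂) ≤ Γ₁ * w₁ * (K - w₁) + Γ₂ * w₂ * (K - w₂) := by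
  have hv₂ : v₂ = w₁ + w₂ - v₁ := by linarith
  subst hv₂
  have hgap : Γ₁ * w₁ * (K - w₁) + Γ₂ * w₂ * (K - w₂)
      - (Γ₁ * v₁ * (K - v₁) + Γ₂ * (w₁ + w₂ - v₁) * (K - (w₁ + w₂ - v₁)))
      = (Γ₁ + Γ₂) * (v₁ - w₁) ^ 2 := by
    linear_combination (w₁ - v₁) * hstat
  linarith [mul_nonneg hΓ (sq_nonneg (v₁ - w₁))]

/-- The case `D = 0` is excluded by `h` itself, because `n / 0 = 0`. -/
lemma mul_lt_mul_of_div_lt_div {a b n D : ℝ} (ha : 0 < a) (hb : 0 < b) (hD : 0 ≤ D)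
    (h : a / b < n / D) : a * D < b * n := by
  have hD' : 0 < D := by
    rcases hD.lt_or_eq with hD' | rfl
    · exact hD'
    · rw [div_zero] at h
      exact absurd h (div_pos ha hb).not_gt
  rw [div_lt_div_iff₀ hb hD'] at h
  linarith

theorem stmt_12_general (C d S1 S2 Γ1 Γ2 : ℝ)
    (hd : 0 < d) (hdC : d ≤ C) (hS1 : 0 ≤ S1) (hS2 : 0 ≤ S2)
    (hΓ1 : 0 < Γ1) (hΓ2 : 0 < Γ2)
    (hCs1 : d ≤ C - S1 - S2)
    (hratio1 : Γ1 / Γ2 < (3 * d + 2 * (S1 + S2) - C) / (C - d))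
    (hratio2 : Γ2 / Γ1 < (3 * d + 2 * (S1 + S2) - C) / (C - d)) :
    (0 ≤ (1 / 2) * (Γ1 * ((C - S1 - S2) + d + S1 + S2)
            + Γ2 * ((C - S1 - S2) - d - S1 - S2)) / (Γ1 + Γ2) ∧
      (1 / 2) * (Γ1 * ((C - S1 - S2) + d + S1 + S2)
            + Γ2 * ((C - S1 - S2) - d - S1 - S2)) / (Γ1 + Γ2) ≤ d ∧
      0 ≤ (1 / 2) * (Γ1 * ((C - S1 - S2) - d - S1 - S2)
            + Γ2 * ((C - S1 - S2) + d + S1 + S2)) / (Γ1 + Γ2) ∧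
      (1 / 2) * (Γ1 * ((C - S1 - S2) - d - S1 - S2)
            + Γ2 * ((C - S1 - S2) + d + S1 + S2)) / (Γ1 + Γ2) ≤ d ∧
      (1 / 2) * (Γ1 * ((C - S1 - S2) + d + S1 + S2)
            + Γ2 * ((C - S1 - S2) - d - S1 - S2)) / (Γ1 + Γ2)
        + (1 / 2) * (Γ1 * ((C - S1 - S2) - d - S1 - S2)
            + Γ2 * ((C - S1 - S2) + d + S1 + S2)) / (Γ1 + Γ2)
          = C - S1 - S2) ∧
    (∀ V1 V2 : ℝ, 0 ≤ V1 → 0 ≤ V2 → V1 + V2 = C - S1 - S2 →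
      Mrev C d Γ1 V1 + Mrev C d Γ2 V2
        ≤ Mrev C d Γ1 ((1 / 2) * (Γ1 * ((C - S1 - S2) + d + S1 + S2)
              + Γ2 * ((C - S1 - S2) - d - S1 - S2)) / (Γ1 + Γ2))
          + Mrev C d Γ2 ((1 / 2) * (Γ1 * ((C - S1 - S2) - d - S1 - S2)
              + Γ2 * ((C - S1 - S2) + d + S1 + S2)) / (Γ1 + Γ2))) := by
  have hA : 0 < Γ1 + Γ2 := by linarith
  have h1 := mul_lt_mul_of_div_lt_div hΓ1 hΓ2 (sub_nonneg.2 hdC) hratio1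
  have h2 := mul_lt_mul_of_div_lt_div hΓ2 hΓ1 (sub_nonneg.2 hdC) hratio2
  set W1 := (1 / 2) * (Γ1 * ((C - S1 - S2) + d + S1 + S2)
    + Γ2 * ((C - S1 - S2) - d - S1 - S2)) / (Γ1 + Γ2)
  set W2 := (1 / 2) * (Γ1 * ((C - S1 - S2) - d - S1 - S2)
    + Γ2 * ((C - S1 - S2) + d + S1 + S2)) / (Γ1 + Γ2)
  have hsum : W1 + W2 = C - S1 - S2 := by
    rw [← add_div, div_eq_iff hA.ne']; ring
  have hW1d : W1 ≤ d := by rw [div_le_iff₀ hA]; linarith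
  have hW2d : W2 ≤ d := by rw [div_le_iff₀ hA]; linarith
  refine ⟨⟨by linarith, hW1d, by linarith, hW2d, hsum⟩, fun V1 V2 hV1 hV2 hV ↦ ?_⟩
  have hstat : Γ1 * (C + d - 2 * W1) = Γ2 * (C + d - 2 * W2) := by
    simp only [W1, W2]; field_simp; ring
  calc Mrev C d Γ1 V1 + Mrev C d Γ2 V2
      ≤ Γ1 * V1 * (C + d - V1) / d + Γ2 * V2 * (C + d - V2) / d :=
        add_le_add (Mrev_le_quadratic hd hΓ1.le (by linarith))
          (Mrev_le_quadratic hd hΓ2.le (by linarith))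
    _ ≤ Γ1 * W1 * (C + d - W1) / d + Γ2 * W2 * (C + d - W2) / d := by
        rw [← add_div, ← add_div]
        exact div_le_div_of_nonneg_right (quadratic_revenue_le_of_stationary hA.le (hV.trans hsum.symm) hstat) hd.le
    _ = Mrev C d Γ1 W1 + Mrev C d Γ2 W2 := by rw [Mrev_of_le hW1d, Mrev_of_le hW2d]

/-- Example 1, case 4: if `d ≤ C_s < 2d` and both `Γ₁/Γ₂` and `Γ₂/Γ₁` are
less than `(3d + 2(S₁ + S₂) − C)/(C − d)`, then the interior allocation
`V₁ = ½(Γ₁(C_s + d + S₁ + S₂) + Γ₂(C_s − d − S₁ − S₂))/(Γ₁ + Γ₂)`,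
`V₂ = ½(Γ₁(C_s − d − S₁ − S₂) + Γ₂(C_s + d + S₁ + S₂))/(Γ₁ + Γ₂)` lies in
`[0, d]²`, sums to `C_s`, and maximizes `M₁(V₁) + M₂(V₂)` over all
`V₁, V₂ ≥ 0` with `V₁ + V₂ = C_s`. -/
theorem stmt_12 (C d S1 S2 Γ1 Γ2 : ℝ)
    (hd : 0 < d) (hdC : d ≤ C) (hS1 : 0 ≤ S1) (hS2 : 0 ≤ S2)
    (hC : S1 + S2 < C) (hΓ1 : 0 < Γ1) (hΓ2 : 0 < Γ2)
    (hCs1 : d ≤ C - S1 - S2) (hCs2 : C - S1 - S2 < 2 * d)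
    (hratio1 : Γ1 / Γ2 < (3 * d + 2 * (S1 + S2) - C) / (C - d))
    (hratio2 : Γ2 / Γ1 < (3 * d + 2 * (S1 + S2) - C) / (C - d)) :
    (0 ≤ (1 / 2) * (Γ1 * ((C - S1 - S2) + d + S1 + S2)
            + Γ2 * ((C - S1 - S2) - d - S1 - S2)) / (Γ1 + Γ2) ∧
      (1 / 2) * (Γ1 * ((C - S1 - S2) + d + S1 + S2)
            + Γ2 * ((C - S1 - S2) - d - S1 - S2)) / (Γ1 + Γ2) ≤ d ∧
      0 ≤ (1 / 2) * (Γ1 * ((C - S1 - S2) - d - S1 - S2)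
            + Γ2 * ((C - S1 - S2) + d + S1 + S2)) / (Γ1 + Γ2) ∧
      (1 / 2) * (Γ1 * ((C - S1 - S2) - d - S1 - S2)
            + Γ2 * ((C - S1 - S2) + d + S1 + S2)) / (Γ1 + Γ2) ≤ d ∧
      (1 / 2) * (Γ1 * ((C - S1 - S2) + d + S1 + S2)
            + Γ2 * ((C - S1 - S2) - d - S1 - S2)) / (Γ1 + Γ2)
        + (1 / 2) * (Γ1 * ((C - S1 - S2) - d - S1 - S2)
            + Γ2 * ((C - S1 - S2) + d + S1 + S2)) / (Γ1 + Γ2)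
          = C - S1 - S2) ∧
    (∀ V1 V2 : ℝ, 0 ≤ V1 → 0 ≤ V2 → V1 + V2 = C - S1 - S2 →
      Mrev C d Γ1 V1 + Mrev C d Γ2 V2
        ≤ Mrev C d Γ1 ((1 / 2) * (Γ1 * ((C - S1 - S2) + d + S1 + S2)
              + Γ2 * ((C - S1 - S2) - d - S1 - S2)) / (Γ1 + Γ2))
          + Mrev C d Γ2 ((1 / 2) * (Γ1 * ((C - S1 - S2) - d - S1 - S2)
              + Γ2 * ((C - S1 - S2) + d + S1 + S2)) / (Γ1 + Γ2))) :=
  stmt_12_general C d S1 S2 Γ1 Γ2 hd hdC hS1 hS2 hΓ1 hΓ2 hCs1 hratio1 hratio2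
end

section
/- Let C > 0, Γ > 0, ν > 0 and k ∈ (0, 1]. Then the function M(V) = Γ·[ (C − V)·(1 − e^{−νV})/(1 − (1 − k)e^{−νV}) + V ] is nondecreasing and concave on the interval [0, C]. -/
/-!
Since `1 - e^{-νV} = r(V) - k e^{-νV}` with `r(V) = 1 - (1 - k) e^{-νV}`, the revenue is
`M(V) = Γ (C - (C - V) g(V))` where `g(V) = k e^{-νV} / r(V)`. On `[0, C]` both `C - V` and `g` are
nonnegative, antitone and convex (`g` is `k e^{-νV}` times the reciprocal of the positive concave
function `r`); two such functions monovary, so their product is again antitone and convex, and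
`M` is monotone and concave.
-/

open Real Set

theorem AntitoneOn.mul {α M₀ : Type*} [Mul M₀] [Zero M₀] [Preorder M₀] [PosMulMono M₀]
    [MulPosMono M₀] [Preorder α] {s : Set α} {f g : α → M₀} (hf : AntitoneOn f s)
    (hg : AntitoneOn g s) (hf₀ : ∀ x ∈ s, 0 ≤ f x) (hg₀ : ∀ x ∈ s, 0 ≤ g x) :
    AntitoneOn (f * g) s :=
  fun _ hx _ hy hxy ↦ mul_le_mul (hf hx hy hxy) (hg hx hy hxy) (hg₀ _ hy) (hf₀ _ hx)

section Convexity

variable {𝕜 E : Type*} [Field 𝕜] [LinearOrder 𝕜] [AddCommMonoid E] [Module 𝕜 E]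

theorem ConvexOn.comp_concaveOn_of_mapsTo {s : Set E} {t : Set 𝕜} {f : E → 𝕜} {g : 𝕜 → 𝕜}
    (hg : ConvexOn 𝕜 t g) (hf : ConcaveOn 𝕜 s f) (hg' : AntitoneOn g t) (hst : MapsTo f s t) :
    ConvexOn 𝕜 s (g ∘ f) := by
  refine ⟨hf.1, fun x hx y hy a b ha hb hab ↦ ?_⟩
  have hxy : a • f x + b • f y ∈ t := hg.1 (hst hx) (hst hy) ha hb hab
  calc g (f (a • x + b • y)) ≤ g (a • f x + b • f y) :=
        hg' hxy (hst (hf.1 hx hy ha hb hab)) (hf.2 hx hy ha hb hab)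
    _ ≤ a • g (f x) + b • g (f y) := hg.2 (hst hx) (hst hy) ha hb hab

theorem ConcaveOn.convexOn_inv [IsStrictOrderedRing 𝕜] {s : Set E} {f : E → 𝕜}
    (hf : ConcaveOn 𝕜 s f) (hf₀ : ∀ x ∈ s, 0 < f x) : ConvexOn 𝕜 s fun x ↦ (f x)⁻¹ := by
  have hinv : ConvexOn 𝕜 (Ioi 0) fun y : 𝕜 ↦ y⁻¹ := by
    simpa only [zpow_neg_one] using convexOn_zpow (𝕜 := 𝕜) (-1)
  exact hinv.comp_concaveOn_of_mapsTo hf antitoneOn_inv_pos hf₀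

end Convexity

theorem convexOn_exp_neg_mul (ν : ℝ) : ConvexOn ℝ univ fun V ↦ exp (-(ν * V)) := by
  simpa [Function.comp_def, neg_mul] using convexOn_exp.comp_linearMap (LinearMap.mul ℝ ℝ (-ν))

theorem antitone_exp_neg_mul {ν : ℝ} (hν : 0 ≤ ν) : Antitone fun V ↦ exp (-(ν * V)) :=
  fun _ _ h ↦ exp_le_exp.2 (neg_le_neg (mul_le_mul_of_nonneg_left h hν))

/-- `r(V) = p(V) + q(V) - p(V) q(V)` in the paper's notation. -/
noncomputable def resolveProb (ν k V : ℝ) : ℝ := 1 - (1 - k) * exp (-(ν * V))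

/-- `1 - p(V) / r(V)` in the paper's notation. -/
noncomputable def dropRatio (ν k V : ℝ) : ℝ := k * exp (-(ν * V)) * (resolveProb ν k V)⁻¹

theorem sub_sub_mul_dropRatio {ν k V : ℝ} (C : ℝ) (hr : resolveProb ν k V ≠ 0) :
    C - (C - V) * dropRatio ν k V = (C - V) * (1 - exp (-(ν * V))) / resolveProb ν k V + V := by
  unfold dropRatio resolveProb at *
  rw [div_eq_mul_inv]
  linear_combination (V - C) * mul_inv_cancel₀ hr

section Retrial

variable {ν k : ℝ}

theorem le_resolveProb (hν : 0 ≤ ν) (hk : k ≤ 1) {V : ℝ} (hV : 0 ≤ V) :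
    k ≤ resolveProb ν k V := by
  have : exp (-(ν * V)) ≤ 1 := exp_le_one_iff.2 (by nlinarith)
  unfold resolveProb
  nlinarith

theorem monotone_resolveProb (hν : 0 ≤ ν) (hk : k ≤ 1) : Monotone (resolveProb ν k) :=
  fun _ _ h ↦ sub_le_sub_left
    (mul_le_mul_of_nonneg_left (antitone_exp_neg_mul hν h) (sub_nonneg.2 hk)) 1

theorem concaveOn_resolveProb (hk : k ≤ 1) : ConcaveOn ℝ univ (resolveProb ν k) := by
  refine (((convexOn_exp_neg_mul ν).smul (sub_nonneg.2 hk)).neg.add_const 1).congr fun V _ ↦ ?_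
  simp only [resolveProb, Pi.add_apply, Pi.neg_apply, smul_eq_mul]
  ring

variable (hν : 0 ≤ ν) (hk₀ : 0 < k) (hk : k ≤ 1)
include hν hk₀ hk

theorem resolveProb_pos {V : ℝ} (hV : 0 ≤ V) : 0 < resolveProb ν k V :=
  hk₀.trans_le (le_resolveProb hν hk hV)

theorem antitoneOn_inv_resolveProb : AntitoneOn (fun V ↦ (resolveProb ν k V)⁻¹) (Ici 0) :=
  fun _ hx _ _ h ↦ inv_anti₀ (resolveProb_pos hν hk₀ hk hx) (monotone_resolveProb hν hk h)

theorem dropRatio_nonneg {V : ℝ} (hV : 0 ≤ V) : 0 ≤ dropRatio ν k V :=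
  mul_nonneg (mul_nonneg hk₀.le (exp_pos _).le) (inv_nonneg.2 (resolveProb_pos hν hk₀ hk hV).le)

theorem antitoneOn_dropRatio : AntitoneOn (dropRatio ν k) (Ici 0) :=
  (((antitone_exp_neg_mul hν).const_mul hk₀.le).antitoneOn _).mul
    (antitoneOn_inv_resolveProb hν hk₀ hk) (fun _ _ ↦ by positivity)
    (fun _ hV ↦ inv_nonneg.2 (resolveProb_pos hν hk₀ hk hV).le)

theorem convexOn_dropRatio : ConvexOn ℝ (Ici 0) (dropRatio ν k) := by
  have hexp := ((convexOn_exp_neg_mul ν).subset (subset_univ _) (convex_Ici 0)).smul hk₀.le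
  have hinv := ((concaveOn_resolveProb hk).subset (subset_univ _) (convex_Ici 0)).convexOn_inv
    fun _ hV ↦ resolveProb_pos hν hk₀ hk hV
  exact hexp.mul hinv (fun _ _ ↦ by positivity)
    (fun _ hV ↦ inv_nonneg.2 (resolveProb_pos hν hk₀ hk hV).le)
    ((((antitone_exp_neg_mul hν).const_mul hk₀.le).antitoneOn _).monovaryOn
      (antitoneOn_inv_resolveProb hν hk₀ hk))

theorem antitoneOn_convexOn_sub_mul_dropRatio (C : ℝ) :
    AntitoneOn (fun V ↦ (C - V) * dropRatio ν k V) (Icc 0 C) ∧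
      ConvexOn ℝ (Icc 0 C) fun V ↦ (C - V) * dropRatio ν k V := by
  have hsub : Icc 0 C ⊆ Ici 0 := Icc_subset_Ici_self
  have hlin : AntitoneOn (fun V ↦ C - V) (Icc 0 C) := fun _ _ _ _ h ↦ sub_le_sub_left h C
  have hlin₀ : ∀ V ∈ Icc 0 C, 0 ≤ C - V := fun _ hV ↦ sub_nonneg.2 hV.2
  have hdrop₀ : ∀ V ∈ Icc 0 C, 0 ≤ dropRatio ν k V := fun _ hV ↦ dropRatio_nonneg hν hk₀ hk hV.1
  have hdrop := (antitoneOn_dropRatio hν hk₀ hk).mono hsub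
  exact ⟨hlin.mul hdrop hlin₀ hdrop₀,
    ((convexOn_const C (convex_Icc 0 C)).sub (concaveOn_id (convex_Icc 0 C))).mul
      ((convexOn_dropRatio hν hk₀ hk).subset hsub (convex_Icc 0 C)) hlin₀ hdrop₀
      (hlin.monovaryOn hdrop)⟩

end Retrial

theorem stmt_17_general (C Γ ν k : ℝ)
    (hΓ : 0 < Γ) (hν : 0 < ν) (hk0 : 0 < k) (hk1 : k ≤ 1) :
    MonotoneOn
      (fun V => Γ * ((C - V) * (1 - Real.exp (-(ν * V)))
          / (1 - (1 - k) * Real.exp (-(ν * V))) + V))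
      (Set.Icc (0:ℝ) C) ∧
    ConcaveOn ℝ (Set.Icc (0:ℝ) C)
      (fun V => Γ * ((C - V) * (1 - Real.exp (-(ν * V)))
          / (1 - (1 - k) * Real.exp (-(ν * V))) + V)) := by
  have hM : EqOn (fun V ↦ Γ * (C - (C - V) * dropRatio ν k V))
      (fun V ↦ Γ * ((C - V) * (1 - exp (-(ν * V))) / (1 - (1 - k) * exp (-(ν * V))) + V))
      (Icc 0 C) := fun V hV ↦
    congrArg (Γ * ·) (sub_sub_mul_dropRatio C (resolveProb_pos hν.le hk0 hk1 hV.1).ne')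
  obtain ⟨hanti, hconv⟩ := antitoneOn_convexOn_sub_mul_dropRatio hν.le hk0 hk1 C
  refine ⟨MonotoneOn.congr (fun a ha b hb hab ↦ ?_) hM, ConcaveOn.congr ?_ hM⟩
  · exact mul_le_mul_of_nonneg_left (sub_le_sub_left (hanti ha hb hab) C) hΓ.le
  · refine ((hconv.neg.add_const C).smul hΓ.le).congr fun V _ ↦ ?_
    simp only [Pi.add_apply, Pi.neg_apply, smul_eq_mul]
    ring

/-- Example 2: for cycle length `C > 0`, gain rate `Γ > 0`, exponential
retrial rate `ν > 0`, and dropping probability `k ∈ (0,1]`, the gross revenue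
`M(V) = Γ[(C − V)(1 − e^{−νV})/(1 − (1 − k)e^{−νV}) + V]`
is nondecreasing and concave on `[0, C]`. -/
theorem stmt_17 (C Γ ν k : ℝ)
    (hC : 0 < C) (hΓ : 0 < Γ) (hν : 0 < ν) (hk0 : 0 < k) (hk1 : k ≤ 1) :
    MonotoneOn
      (fun V => Γ * ((C - V) * (1 - Real.exp (-(ν * V)))
          / (1 - (1 - k) * Real.exp (-(ν * V))) + V))
      (Set.Icc (0:ℝ) C) ∧
    ConcaveOn ℝ (Set.Icc (0:ℝ) C)
      (fun V => Γ * ((C - V) * (1 - Real.exp (-(ν * V)))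
          / (1 - (1 - k) * Real.exp (-(ν * V))) + V)) :=
  stmt_17_general C Γ ν k hΓ hν hk0 hk1
end
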